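/- Fix m ≥ 1, n×n real matrices Φ₁,…,Φ_m, feedback matrices K₁,…,K_m (each p×n), a symmetric positive semidefinite n×n matrix q̃, a symmetric positive semidefinite p×p matrix r̃, and k ∈ ℕ. Let ξ_{i+1} = Φ_{σ(i)} ξ_i for i ≥ k with inputs u_{k+i} = K_{σ(k+i)} ξ_{k+i}, let Ψ = Φ_{σ(k+m−1)} ⋯ Φ_{σ(k)}, Π₀ = I, Π_i = Φ_{σ(k+i−1)} ⋯ Φ_{σ(k)} for 1 ≤ i ≤ m, M_x = Σ_{i=1}^{m} Π_iᵀ q̃ Π_i and M_u = Σ_{i=0}^{m−1} (K_{σ(k+i)} Π_i)ᵀ r̃ (K_{σ(k+i)} Π_i). Assume the families (j ↦ (Ψᵀ)ʲ M_x Ψʲ) and (j ↦ (Ψᵀ)ʲ M_u Ψʲ) are summable, with sums P_ξ and P_u respectively, and set P_{ξ+u} = P_ξ + P_u. Then the total infinite-horizon cost satisfies Σ_{i=0}^{∞} ( ξ_{k+i+1}ᵀ q̃ ξ_{k+i+1} + u_{k+i}ᵀ r̃ u_{k+i} ) = ξ_kᵀ P_{ξ+u} ξ_k, and P_{ξ+u}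 satisfies the Lyapunov equation P_{ξ+u} = Ψᵀ P_{ξ+u} Ψ + M_x + M_u. -/

import Mathlib

/-!
Along the closed loop `ξ_{k+i} = Π_i ξ_k`, and the `m`-periodicity of `σ` gives
`Π_{jm+r} = Π_r Ψ^j`, so the cost incurred during the `j`-th period is
`ξ_kᵀ (Ψᵀ)^j (M_x + M_u) Ψ^j ξ_k`. The stage costs are nonnegative, so the cost series
converges to the same value as its series of period sums, namely `ξ_kᵀ P_{ξ+u} ξ_k`.
The Lyapunov equation says that the series `∑ (Ψᵀ)^j M Ψ^j` equals its first term plus its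
shift `Ψᵀ (∑ (Ψᵀ)^j M Ψ^j) Ψ`.
-/

open Matrix Filter Finset

theorem Finset.sum_range_mul_eq_sum_sum_range {M : Type*} [AddCommMonoid M] (f : ℕ → M)
    (m N : ℕ) : ∑ i ∈ range (N * m), f i = ∑ j ∈ range N, ∑ r ∈ range m, f (j * m + r) := by
  induction N with
  | zero => simp
  | succ N ih => rw [add_mul, one_mul, sum_range_add, ih, sum_range_succ]

theorem hasSum_iff_hasSum_sum_range_mul_add_of_nonneg {c : ℕ → ℝ} (hc : ∀ i, 0 ≤ c i)
    {m : ℕ} (hm : 0 < m) {a : ℝ} :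
    HasSum c a ↔ HasSum (fun j ↦ ∑ r ∈ range m, c (j * m + r)) a := by
  -- the partial sums are monotone, so their limit is that of the subsequence along `N * m`
  rw [hasSum_iff_tendsto_nat_of_nonneg hc,
    hasSum_iff_tendsto_nat_of_nonneg fun j ↦ sum_nonneg fun r _ ↦ hc _,
    tendsto_iff_tendsto_subseq_of_monotone (monotone_nat_of_le_succ fun N ↦ ?_)
      (tendsto_id.atTop_mul_const' hm)]
  · simp only [Function.comp_def, id, sum_range_mul_eq_sum_sum_range]
  · simpa [sum_range_succ] using hc N

theorem HasSum.dotProduct_mulVec {ι n R : Type*} [Fintype n] [NonUnitalNonAssocSemiring R]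
    [TopologicalSpace R] [IsTopologicalSemiring R] {f : ι → Matrix n n R} {M : Matrix n n R}
    (h : HasSum f M) (x y : n → R) : HasSum (fun j ↦ x ⬝ᵥ f j *ᵥ y) (x ⬝ᵥ M *ᵥ y) :=
  h.map (⟨⟨fun M ↦ x ⬝ᵥ M *ᵥ y, by simp⟩, fun M N ↦ by simp [add_mulVec, dotProduct_add]⟩ :
      Matrix n n R →+ R)
    (continuous_const.dotProduct (continuous_id.matrix_mulVec continuous_const))

theorem HasSum.eq_mul_mul_add_of_pow {R : Type*} [Semiring R] [TopologicalSpace R]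
    [IsTopologicalSemiring R] [T2Space R] {A B M P : R}
    (h : HasSum (fun j ↦ A ^ j * M * B ^ j) P) : P = A * P * B + M := by
  have sandwich (j : ℕ) : A * (A ^ j * M * B ^ j) * B = A ^ (j + 1) * M * B ^ (j + 1) := by
    rw [pow_succ' A, pow_succ B]
    simp only [mul_assoc]
  have shifted : HasSum (fun j ↦ A ^ (j + 1) * M * B ^ (j + 1)) (A * P * B) := by
    simpa only [sandwich] using (h.mul_left A).mul_right B
  simpa [add_comm] using h.unique shifted.zero_add

theorem Matrix.dotProduct_transpose_mul_mul_mulVec {l n R : Type*} [Fintype l] [Fintype n]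
    [CommSemiring R] (A : Matrix l n R) (Q : Matrix l l R) (B : Matrix l n R) (x y : n → R) :
    x ⬝ᵥ (Aᵀ * Q * B) *ᵥ y = (A *ᵥ x) ⬝ᵥ Q *ᵥ (B *ᵥ y) := by
  rw [← mulVec_mulVec, ← mulVec_mulVec, dotProduct_mulVec, vecMul_transpose]

theorem apply_mul_add_eq_mul_pow_of_periodic {M : Type*} [Monoid M] {P F : ℕ → M} {m : ℕ}
    (h0 : P 0 = 1) (hs : ∀ i, P (i + 1) = F i * P i) (hF : Function.Periodic F m) (j r : ℕ) :
    P (j * m + r) = P r * P m ^ j := by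
  have hperiod : ∀ i, P (i + m) = P i * P m := by
    intro i
    induction i with
    | zero => rw [h0, zero_add, one_mul]
    | succ i ih => rw [add_right_comm, hs, hF, ih, hs, mul_assoc]
  induction j with
  | zero => simp
  | succ j ih => rw [add_mul, one_mul, add_right_comm, hperiod, ih, pow_succ, mul_assoc]

theorem apply_add_eq_mulVec_of_recurrence {n R : Type*} [Fintype n] [DecidableEq n] [Semiring R]
    {F P : ℕ → Matrix n n R} {ξ : ℕ → n → R} {k : ℕ}
    (hξ : ∀ i, k ≤ i → ξ (i + 1) = F i *ᵥ ξ i) (h0 : P 0 = 1)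
    (hs : ∀ i, P (i + 1) = F (k + i) * P i) (i : ℕ) : ξ (k + i) = P i *ᵥ ξ k := by
  induction i with
  | zero => simp [h0]
  | succ i ih => rw [← add_assoc, hξ _ (k.le_add_right i), ih, hs, mulVec_mulVec]

/-- Total-cost formula for a linear m-periodic closed loop under periodic feedback
(the cost of multiplexed MPC when constraints are inactive).  `σ k = (k % m) + 1`;
`ξ_{i+1} = Φ_{σ(i)} ξ_i` for `i ≥ k` with inputs `u_{k+i} = K_{σ(k+i)} ξ_{k+i}`;
`Π_i` partial products with `Π₀ = I`, `Ψ = Π_m`, `M_x = Σ_{i=1}^m Π_iᵀ q̃ Π_i`,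
`M_u = Σ_{i=0}^{m−1} (K_{σ(k+i)}Π_i)ᵀ r̃ (K_{σ(k+i)}Π_i)`.  If both matrix families are
summable with sums `P_ξ` and `P_u`, and `P_{ξ+u} = P_ξ + P_u`, then
`Σ_{i=0}^∞ (ξ_{k+i+1}ᵀ q̃ ξ_{k+i+1} + u_{k+i}ᵀ r̃ u_{k+i}) = ξ_kᵀ P_{ξ+u} ξ_k` and
`P_{ξ+u} = Ψᵀ P_{ξ+u} Ψ + M_x + M_u`. -/
theorem stmt_10 {n p : ℕ} (m : ℕ) (hm : 1 ≤ m)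
    (Φ : ℕ → Matrix (Fin n) (Fin n) ℝ)
    (K : ℕ → Matrix (Fin p) (Fin n) ℝ)
    (qt : Matrix (Fin n) (Fin n) ℝ) (hqt : qt.PosSemidef)
    (rt : Matrix (Fin p) (Fin p) ℝ) (hrt : rt.PosSemidef)
    (σ : ℕ → ℕ) (hσ : ∀ k, σ k = k % m + 1)
    (k : ℕ) (ξ : ℕ → Fin n → ℝ)
    (hdyn : ∀ i, k ≤ i → ξ (i + 1) = (Φ (σ i)).mulVec (ξ i))
    (u : ℕ → Fin p → ℝ)
    (hu : ∀ i, u (k + i) = (K (σ (k + i))).mulVec (ξ (k + i)))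
    (Pmat : ℕ → Matrix (Fin n) (Fin n) ℝ)
    (hPmat0 : Pmat 0 = 1)
    (hPmat : ∀ i, Pmat (i + 1) = Φ (σ (k + i)) * Pmat i)
    (Ψ : Matrix (Fin n) (Fin n) ℝ) (hΨ : Ψ = Pmat m)
    (Mx : Matrix (Fin n) (Fin n) ℝ)
    (hMx : Mx = ∑ i ∈ Finset.Icc 1 m, (Pmat i)ᵀ * qt * Pmat i)
    (Mu : Matrix (Fin n) (Fin n) ℝ)
    (hMu : Mu = ∑ i ∈ Finset.range m,
      (K (σ (k + i)) * Pmat i)ᵀ * rt * (K (σ (k + i)) * Pmat i))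
    (hsumx : Summable fun j : ℕ => (Ψᵀ) ^ j * Mx * Ψ ^ j)
    (hsumu : Summable fun j : ℕ => (Ψᵀ) ^ j * Mu * Ψ ^ j)
    (Pξ : Matrix (Fin n) (Fin n) ℝ)
    (hPξ : Pξ = ∑' j : ℕ, (Ψᵀ) ^ j * Mx * Ψ ^ j)
    (Pu : Matrix (Fin n) (Fin n) ℝ)
    (hPu : Pu = ∑' j : ℕ, (Ψᵀ) ^ j * Mu * Ψ ^ j)
    (Pξu : Matrix (Fin n) (Fin n) ℝ)
    (hPξu : Pξu = Pξ + Pu) :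
    (∑' i : ℕ, ((ξ (k + i + 1)) ⬝ᵥ (qt.mulVec (ξ (k + i + 1)))
          + (u (k + i)) ⬝ᵥ (rt.mulVec (u (k + i)))))
        = (ξ k) ⬝ᵥ (Pξu.mulVec (ξ k))
      ∧ Pξu = Ψᵀ * Pξu * Ψ + Mx + Mu := by
  have hσper : Function.Periodic (fun i ↦ σ (k + i)) m := fun i ↦ by
    simp only [hσ, ← add_assoc, Nat.add_mod_right]
  have hblock (j r : ℕ) : Pmat (j * m + r) = Pmat r * Ψ ^ j :=
    hΨ ▸ apply_mul_add_eq_mul_pow_of_periodic hPmat0 hPmat (hσper.comp Φ) j r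
  have hξ : ∀ i, ξ (k + i) = Pmat i *ᵥ ξ k := apply_add_eq_mulVec_of_recurrence hdyn hPmat0 hPmat
  set D : ℕ → Matrix (Fin n) (Fin n) ℝ := fun i ↦ (Pmat (i + 1))ᵀ * qt * Pmat (i + 1)
    + (K (σ (k + i)) * Pmat i)ᵀ * rt * (K (σ (k + i)) * Pmat i) with hD
  have hcost (i : ℕ) : ξ (k + i + 1) ⬝ᵥ qt *ᵥ ξ (k + i + 1) + u (k + i) ⬝ᵥ rt *ᵥ u (k + i)
      = ξ k ⬝ᵥ D i *ᵥ ξ k := by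
    simp only [add_assoc, hξ, hu, mulVec_mulVec, hD, add_mulVec, dotProduct_add,
      dotProduct_transpose_mul_mul_mulVec]
  have hDblock (j r : ℕ) : D (j * m + r) = (Ψᵀ) ^ j * D r * Ψ ^ j := by
    have hσjr : σ (k + (j * m + r)) = σ (k + r) := by
      simpa only [add_comm r, Nat.cast_id] using (hσper.nat_mul j) r
    simp only [hD, hσjr, add_assoc, hblock, transpose_mul, transpose_pow, Matrix.mul_add,
      Matrix.add_mul, Matrix.mul_assoc]
  have hDsum : ∑ r ∈ range m, D r = Mx + Mu := by
    rw [hMx, hMu, sum_add_distrib, ← Ico_add_one_right_eq_Icc, sum_Ico_eq_sum_range]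
    simp only [add_comm 1, Nat.add_sub_cancel]
  have hP : HasSum (fun j ↦ (Ψᵀ) ^ j * (Mx + Mu) * Ψ ^ j) Pξu := by
    simpa only [hPξu, hPξ, hPu, Matrix.mul_add, Matrix.add_mul]
      using hsumx.hasSum.add hsumu.hasSum
  have hnonneg (i : ℕ) : 0 ≤ ξ k ⬝ᵥ D i *ᵥ ξ k := by
    rw [← hcost]
    exact add_nonneg (by simpa using hqt.dotProduct_mulVec_nonneg _)
      (by simpa using hrt.dotProduct_mulVec_nonneg _)
  refine ⟨HasSum.tsum_eq ?_, hP.eq_mul_mul_add_of_pow.trans (add_assoc _ _ _).symm⟩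
  simp only [hcost, hasSum_iff_hasSum_sum_range_mul_add_of_nonneg hnonneg hm, hDblock,
    ← dotProduct_sum, ← sum_mulVec, ← sum_mul, ← mul_sum, hDsum]
  exact hP.dotProduct_mulVec _ _
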